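/- arXiv:2401.01088 — 2 statements merged into one kernel-verified Lean document; each statement's English description precedes it below -/
import Mathlib

section
/- Let φ : ℝ^d → ℝ be a convex, Lipschitz continuous function with Lipschitz constant Lip(φ), and for α > 0 let Σ_α = {x ∈ ℝ^d : diam(∂φ(x)) ≥ α}. Then there exists a constant c_d depending only on the dimension d such that for all R > 0 and α > 0, the (d−1)-dimensional Hausdorff measure satisfies H^{d−1}(Σ_α ∩ B(0,R)) ≤ c_d · Lip(φ) · R^{d−1}/α. -/
/-!
Monotonicity of `∂φ` makes the inverse of `x ↦ x + t ∂φ(x)` (the proximal map of `t φ`)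
1-Lipschitz; take `t = R / Lip(φ)`, so that `x + t ∂φ(x) ⊆ B(0, 2R)` for `x ∈ B(0, R)`.
If `diam ∂φ(x) ≥ α`, the convex set `x + t ∂φ(x)` contains two points at distance `≥ tα/2`,
so along it some coordinate sweeps an interval of length `≥ h := tα / (2√d)` and hence meets
`hℤ`. Thus `Σ_α ∩ B(0, R)` is covered by 1-Lipschitz images of `d (4R/h + 1) = O(d^{3/2} Lip(φ)/α)`
pieces of coordinate hyperplanes inside `B(0, 2R)`, each of `H^{d-1}`-measure `O(R^{d-1})`.
-/

open Metric Set MeasureTheory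

/-- The subdifferential of `φ` at `x`. -/
def subdiff {d : ℕ} (φ : EuclideanSpace ℝ (Fin d) → ℝ) (x : EuclideanSpace ℝ (Fin d)) :
    Set (EuclideanSpace ℝ (Fin d)) :=
  {g | ∀ y, φ x + (inner ℝ g (y - x) : ℝ) ≤ φ y}

open scoped ENNReal NNReal

def singularSet {d : ℕ} (φ : EuclideanSpace ℝ (Fin d) → ℝ) (α : ℝ) :
    Set (EuclideanSpace ℝ (Fin d)) :=
  {x | α ≤ diam (subdiff φ x)}

section Subdiff

variable {d : ℕ} {φ : EuclideanSpace ℝ (Fin d) → ℝ} {x x' g g' : EuclideanSpace ℝ (Fin d)}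

theorem inner_sub_sub_nonneg_of_mem_subdiff (hg : g ∈ subdiff φ x) (hg' : g' ∈ subdiff φ x') :
    0 ≤ inner ℝ (g - g') (x - x') := by
  have h := hg x'
  have h' := hg' x
  rw [← neg_sub x x', inner_neg_right] at h
  rw [inner_sub_left]
  linarith

theorem convex_subdiff : Convex ℝ (subdiff φ x) := by
  intro g₁ h₁ g₂ h₂ a b ha hb hab y
  rw [inner_add_left, real_inner_smul_left, real_inner_smul_left]
  have hsum : ∀ r : ℝ, r = a * r + b * r := fun r ↦ by rw [← add_mul, hab, one_mul]
  linarith [mul_le_mul_of_nonneg_left (h₁ y) ha, mul_le_mul_of_nonneg_left (h₂ y) hb,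
    hsum (φ x), hsum (φ y)]

theorem norm_le_of_mem_subdiff {L : ℝ≥0} (hL : LipschitzWith L φ) (hg : g ∈ subdiff φ x) :
    ‖g‖ ≤ L := by
  have hlow := hg (x + g)
  rw [add_sub_cancel_left, real_inner_self_eq_norm_sq] at hlow
  have hup : φ (x + g) - φ x ≤ L * ‖g‖ := by
    simpa [Real.dist_eq, dist_eq_norm] using (le_abs_self _).trans (hL.dist_le_mul (x + g) x)
  by_contra! hLg
  nlinarith [L.coe_nonneg]

theorem diam_subdiff_le {L : ℝ≥0} (hL : LipschitzWith L φ) (x : EuclideanSpace ℝ (Fin d)) :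
    diam (subdiff φ x) ≤ 2 * L :=
  (diam_mono (fun _ hg ↦ mem_closedBall_zero_iff.2 (norm_le_of_mem_subdiff hL hg))
    isBounded_closedBall).trans (diam_closedBall L.coe_nonneg)

theorem dist_le_dist_add_smul_of_mem_subdiff (hg : g ∈ subdiff φ x) (hg' : g' ∈ subdiff φ x')
    {t : ℝ} (ht : 0 ≤ t) : dist x x' ≤ dist (x + t • g) (x' + t • g') := by
  rw [dist_eq_norm, dist_eq_norm]
  have hsplit : x + t • g - (x' + t • g') = (x - x') + t • (g - g') := by
    rw [smul_sub]; abel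
  have hinner : ‖x - x'‖ ^ 2 ≤ inner ℝ (x + t • g - (x' + t • g')) (x - x') := by
    rw [hsplit, inner_add_left, real_inner_smul_left, real_inner_self_eq_norm_sq]
    nlinarith [inner_sub_sub_nonneg_of_mem_subdiff hg hg']
  have hcs := real_inner_le_norm (x + t • g - (x' + t • g')) (x - x')
  by_contra! hlt
  nlinarith [norm_nonneg (x + t • g - (x' + t • g'))]

end Subdiff

/-- The graph over `A` of the resolvent `(I + t ∂φ)⁻¹`, as pairs `(z, x)` with
`z ∈ x + t ∂φ(x)`. -/
def resolventGraph {d : ℕ} (φ : EuclideanSpace ℝ (Fin d) → ℝ)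
    (A : Set (EuclideanSpace ℝ (Fin d))) (t : ℝ) :
    Set (EuclideanSpace ℝ (Fin d) × EuclideanSpace ℝ (Fin d)) :=
  {p | ∃ x ∈ A, ∃ g ∈ subdiff φ x, p = (x + t • g, x)}

section ResolventGraph

variable {d : ℕ} {φ : EuclideanSpace ℝ (Fin d) → ℝ} {A : Set (EuclideanSpace ℝ (Fin d))} {t : ℝ}

theorem dist_snd_le_dist_fst_of_mem_resolventGraph (ht : 0 ≤ t) :
    ∀ p ∈ resolventGraph φ A t, ∀ q ∈ resolventGraph φ A t, dist p.2 q.2 ≤ dist p.1 q.1 := by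
  rintro _ ⟨x, -, g, hg, rfl⟩ _ ⟨x', -, g', hg', rfl⟩
  exact dist_le_dist_add_smul_of_mem_subdiff hg hg' ht

theorem image_fst_resolventGraph_subset_closedBall {L : ℝ≥0} (hL : LipschitzWith L φ)
    (ht : 0 ≤ t) {R : ℝ} (hA : A ⊆ closedBall 0 R) :
    Prod.fst '' resolventGraph φ A t ⊆ closedBall 0 (R + t * L) := by
  rintro _ ⟨_, ⟨x, hx, g, hg, rfl⟩, rfl⟩
  rw [mem_closedBall_zero_iff]
  calc ‖x + t • g‖ ≤ ‖x‖ + t * ‖g‖ := by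
        simpa [norm_smul, abs_of_nonneg ht] using norm_add_le x (t • g)
    _ ≤ R + t * L := by
        gcongr
        exacts [mem_closedBall_zero_iff.1 (hA hx), norm_le_of_mem_subdiff hL hg]

end ResolventGraph

theorem exists_lt_dist_of_lt_diam {X : Type*} [PseudoMetricSpace X] {s : Set X} {r : ℝ}
    (hr : 0 ≤ r) (h : r < diam s) : ∃ a ∈ s, ∃ b ∈ s, r < dist a b := by
  by_contra! hs
  exact (diam_le_of_forall_dist_le hr hs).not_gt h

theorem exists_norm_le_sqrt_card_mul_abs_apply {ι : Type*} [Fintype ι] [Nonempty ι]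
    (v : EuclideanSpace ℝ ι) : ∃ i, ‖v‖ ≤ √(Fintype.card ι) * |v i| := by
  obtain ⟨i, hi⟩ :=
    exists_eq_ciSup_of_finite (f := fun i ↦ ‖inner ℝ (EuclideanSpace.basisFun ι ℝ i) v‖)
  refine ⟨i, ?_⟩
  have hv := (EuclideanSpace.basisFun ι ℝ).norm_le_card_mul_iSup_norm_inner v
  rw [← hi] at hv
  simpa using hv

theorem exists_int_mul_mem_uIcc {a b h : ℝ} (hh : 0 < h) (hab : h ≤ |b - a|) :
    ∃ m : ℤ, m * h ∈ uIcc a b := by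
  wlog hle : a ≤ b generalizing a b
  · obtain ⟨m, hm⟩ := this (by rwa [abs_sub_comm]) (le_of_not_ge hle)
    exact ⟨m, uIcc_comm a b ▸ hm⟩
  rw [abs_of_nonneg (sub_nonneg.2 hle)] at hab
  refine ⟨⌈a / h⌉, ?_⟩
  rw [uIcc_of_le hle]
  constructor
  · exact (div_le_iff₀ hh).1 (Int.le_ceil _)
  · nlinarith [Int.ceil_lt_add_one (a / h), div_mul_cancel₀ a hh.ne']

theorem lipschitzWith_toLp_insertNth {n : ℕ} (i : Fin (n + 1)) (c : ℝ) :
    LipschitzWith (NNReal.sqrt (n + 1))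
      (fun w : Fin n → ℝ ↦ WithLp.toLp 2 (i.insertNth c w : Fin (n + 1) → ℝ)) := by
  have hins : LipschitzWith 1 (fun w : Fin n → ℝ ↦ (i.insertNth c w : Fin (n + 1) → ℝ)) :=
    LipschitzWith.of_dist_le_mul fun w w' ↦ by simp [Fin.dist_insertNth_insertNth]
  convert (PiLp.lipschitzWith_toLp 2 (fun _ : Fin (n + 1) ↦ ℝ)).comp hins using 1
  · rw [mul_one, NNReal.sqrt_eq_rpow]
    norm_num
  · rfl

theorem hausdorffMeasure_setOf_apply_eq_inter_closedBall_le {n : ℕ} (i : Fin (n + 1)) (c : ℝ)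
    {r : ℝ} (hr : 0 ≤ r) :
    μH[n] ({z : EuclideanSpace ℝ (Fin (n + 1)) | z i = c} ∩ closedBall 0 r) ≤
      ENNReal.ofReal ((√(n + 1) * (2 * r)) ^ n) := by
  set e := fun w : Fin n → ℝ ↦ WithLp.toLp 2 (i.insertNth c w : Fin (n + 1) → ℝ)
  have hsub : {z : EuclideanSpace ℝ (Fin (n + 1)) | z i = c} ∩ closedBall 0 r ⊆
      e '' closedBall 0 r := by
    rintro z ⟨rfl, hz⟩
    refine ⟨i.removeNth z, ?_, by simp [e]⟩
    rw [mem_closedBall_zero_iff, pi_norm_le_iff_of_nonneg hr]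
    exact fun k ↦ (PiLp.norm_apply_le z _).trans (mem_closedBall_zero_iff.1 hz)
  have hvol : (μH[n] : Measure (Fin n → ℝ)) = volume := by
    simpa using hausdorffMeasure_pi_real (ι := Fin n)
  calc μH[n] ({z : EuclideanSpace ℝ (Fin (n + 1)) | z i = c} ∩ closedBall 0 r)
      ≤ μH[n] (e '' closedBall 0 r) := measure_mono hsub
    _ ≤ (NNReal.sqrt (n + 1) : ℝ≥0∞) ^ (n : ℝ) * μH[n] (closedBall (0 : Fin n → ℝ) r) :=
      (lipschitzWith_toLp_insertNth i c).hausdorffMeasure_image_le n.cast_nonneg _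
    _ = ENNReal.ofReal ((√(n + 1) * (2 * r)) ^ n) := by
      rw [hvol, Real.volume_pi_closedBall 0 hr, Fintype.card_fin, ENNReal.rpow_natCast,
        mul_pow (√((n : ℝ) + 1)), ENNReal.ofReal_mul (by positivity),
        ENNReal.ofReal_pow (Real.sqrt_nonneg _)]
      congr
      ext
      simp

theorem exists_lipschitzOnWith_one_of_dist_le {X Y : Type*} [PseudoMetricSpace X]
    [MetricSpace Y] [Nonempty Y] {T : Set (X × Y)}
    (hT : ∀ p ∈ T, ∀ q ∈ T, dist p.2 q.2 ≤ dist p.1 q.1) :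
    ∃ f : X → Y, LipschitzOnWith 1 f (Prod.fst '' T) ∧ ∀ p ∈ T, f p.1 = p.2 := by
  let f : X → Y := fun z ↦ Classical.epsilon fun y ↦ (z, y) ∈ T
  have hf : ∀ p ∈ T, f p.1 = p.2 := fun p hp ↦ dist_le_zero.1 <| by
    simpa using hT (p.1, f p.1) (Classical.epsilon_spec (p := fun y ↦ (p.1, y) ∈ T) ⟨p.2, hp⟩) p hp
  refine ⟨f, LipschitzOnWith.mk_one ?_, hf⟩
  rintro _ ⟨p, hp, rfl⟩ _ ⟨q, hq, rfl⟩
  rw [hf p hp, hf q hq]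
  exact hT p hp q hq

theorem hausdorffMeasure_le_of_subset_biUnion_image {n : ℕ} {Y ι : Type*} [EMetricSpace Y]
    [MeasurableSpace Y] [BorelSpace Y] (F : Finset ι) (i : ι → Fin (n + 1)) (c : ι → ℝ)
    {u : EuclideanSpace ℝ (Fin (n + 1)) → Y} {S : Set (EuclideanSpace ℝ (Fin (n + 1)))}
    (hu : LipschitzOnWith 1 u S) {r : ℝ} (hr : 0 ≤ r) (hS : S ⊆ closedBall 0 r) {A : Set Y}
    (hA : A ⊆ ⋃ k ∈ F, u '' (S ∩ {z | z (i k) = c k})) :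
    μH[n] A ≤ ENNReal.ofReal (F.card * (√(n + 1) * (2 * r)) ^ n) := by
  calc μH[n] A ≤ μH[n] (⋃ k ∈ F, u '' (S ∩ {z | z (i k) = c k})) := measure_mono hA
    _ ≤ ∑ k ∈ F, μH[n] (u '' (S ∩ {z | z (i k) = c k})) := measure_biUnion_finset_le _ _
    _ ≤ ∑ _k ∈ F, ENNReal.ofReal ((√(n + 1) * (2 * r)) ^ n) := by
      refine Finset.sum_le_sum fun k _ ↦ ?_
      calc μH[n] (u '' (S ∩ {z | z (i k) = c k})) ≤ μH[n] (S ∩ {z | z (i k) = c k}) := by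
            simpa using (hu.mono inter_subset_left).hausdorffMeasure_image_le n.cast_nonneg
        _ ≤ μH[n] ({z | z (i k) = c k} ∩ closedBall 0 r) :=
            measure_mono fun z hz ↦ ⟨hz.2, hS hz.1⟩
        _ ≤ _ := hausdorffMeasure_setOf_apply_eq_inter_closedBall_le (i k) (c k) hr
    _ = ENNReal.ofReal (F.card * (√(n + 1) * (2 * r)) ^ n) := by
      rw [Finset.sum_const, nsmul_eq_mul, ENNReal.ofReal_mul (by positivity),
        ENNReal.ofReal_natCast]

theorem Int.mem_Icc_neg_floor_of_abs_mul_le {m : ℤ} {h r : ℝ} (hh : 0 < h)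
    (hm : |(m : ℝ)| * h ≤ r) : m ∈ Finset.Icc (-⌊r / h⌋₊ : ℤ) ⌊r / h⌋₊ := by
  have hmr : m.natAbs ≤ ⌊r / h⌋₊ := by
    rw [Nat.le_floor_iff (div_nonneg ((mul_nonneg (abs_nonneg _) hh.le).trans hm) hh.le),
      Nat.cast_natAbs, Int.cast_abs, le_div_iff₀ hh]
    exact hm
  rw [Finset.mem_Icc, ← abs_le, Int.abs_eq_natAbs]
  exact_mod_cast hmr

theorem Int.card_Icc_neg_natCast (N : ℕ) : (Finset.Icc (-N : ℤ) N).card = 2 * N + 1 := by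
  rw [Int.card_Icc]
  omega

theorem exists_mem_subdiff_apply_eq_int_mul {n : ℕ} {φ : EuclideanSpace ℝ (Fin (n + 1)) → ℝ}
    {x : EuclideanSpace ℝ (Fin (n + 1))} {α t : ℝ} (hα : 0 < α) (ht : 0 < t)
    (hx : x ∈ singularSet φ α) :
    ∃ g ∈ subdiff φ x, ∃ i, ∃ m : ℤ, (x + t • g) i = m * (t * α / (2 * √(n + 1))) := by
  obtain ⟨g₁, hg₁, g₂, hg₂, hgap⟩ :=
    exists_lt_dist_of_lt_diam (half_pos hα).le ((half_lt_self hα).trans_le hx)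
  obtain ⟨i, hi⟩ := exists_norm_le_sqrt_card_mul_abs_apply (g₁ - g₂)
  set f := fun g : EuclideanSpace ℝ (Fin (n + 1)) ↦ (x + t • g) i
  have hf : Continuous f := by fun_prop
  have hgap' : t * α / (2 * √(n + 1)) ≤ |f g₂ - f g₁| := by
    have hcoord : α / 2 < √(n + 1) * |g₁ i - g₂ i| := by
      simpa using hgap.trans_le ((dist_eq_norm g₁ g₂).trans_le hi)
    have hdiff : f g₂ - f g₁ = t * (g₂ i - g₁ i) := by simp [f]; ring
    rw [hdiff, abs_mul, abs_of_pos ht, abs_sub_comm, mul_div_assoc]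
    refine mul_le_mul_of_nonneg_left ?_ ht.le
    rw [div_le_iff₀ (by positivity)]
    linarith
  obtain ⟨m, hm⟩ := exists_int_mul_mem_uIcc (by positivity) hgap'
  obtain ⟨g, hg, hgm⟩ :=
    (convex_subdiff.isPreconnected.image f hf.continuousOn).ordConnected.uIcc_subset
      (mem_image_of_mem f hg₁) (mem_image_of_mem f hg₂) hm
  exact ⟨g, hg, i, m, hgm⟩

theorem subset_biUnion_image_resolventGraph {n : ℕ} {φ : EuclideanSpace ℝ (Fin (n + 1)) → ℝ}
    {A : Set (EuclideanSpace ℝ (Fin (n + 1)))} {α t r : ℝ} (hα : 0 < α) (ht : 0 < t)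
    (hA : A ⊆ singularSet φ α) (hr : Prod.fst '' resolventGraph φ A t ⊆ closedBall 0 r)
    {u : EuclideanSpace ℝ (Fin (n + 1)) → EuclideanSpace ℝ (Fin (n + 1))}
    (hu : ∀ p ∈ resolventGraph φ A t, u p.1 = p.2) :
    let h := t * α / (2 * √(n + 1))
    A ⊆ ⋃ k ∈ (Finset.univ ×ˢ Finset.Icc (-⌊r / h⌋₊ : ℤ) ⌊r / h⌋₊ : Finset (Fin (n + 1) × ℤ)),
      u '' (Prod.fst '' resolventGraph φ A t ∩ {z | z k.1 = k.2 * h}) := by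
  intro h x hx
  obtain ⟨g, hg, i, m, hm⟩ := exists_mem_subdiff_apply_eq_int_mul hα ht (hA hx)
  have hxT : (x + t • g, x) ∈ resolventGraph φ A t := ⟨x, hx, g, hg, rfl⟩
  have hmN : m ∈ Finset.Icc (-⌊r / h⌋₊ : ℤ) ⌊r / h⌋₊ := by
    refine Int.mem_Icc_neg_floor_of_abs_mul_le (by positivity) ?_
    rw [← abs_of_pos (show 0 < h by positivity), ← abs_mul, ← hm]
    exact (PiLp.norm_apply_le _ i).trans (mem_closedBall_zero_iff.1 (hr ⟨_, hxT, rfl⟩))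
  exact mem_iUnion₂.2 ⟨(i, m), Finset.mem_product.2 ⟨Finset.mem_univ i, hmN⟩,
    x + t • g, ⟨⟨_, hxT, rfl⟩, hm⟩, hu _ hxT⟩

theorem hausdorffMeasure_singularSet_inter_closedBall_le {n : ℕ}
    {φ : EuclideanSpace ℝ (Fin (n + 1)) → ℝ} {L : ℝ≥0} (hL : LipschitzWith L φ) {R α : ℝ}
    (hR : 0 < R) (hα : 0 < α) :
    μH[n] (singularSet φ α ∩ closedBall 0 R) ≤
      ENNReal.ofReal ((n + 1) * (8 * √(n + 1) + 2) * (4 * √(n + 1)) ^ n * L * R ^ n / α) := by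
  rcases (singularSet φ α ∩ closedBall 0 R).eq_empty_or_nonempty with hempty | ⟨x₀, hx₀, -⟩
  · simp [hempty]
  have hαL : α ≤ 2 * L := hx₀.trans (diam_subdiff_le hL x₀)
  have hL0 : 0 < (L : ℝ) := by linarith
  set t := R / L
  have ht : 0 < t := by positivity
  set T := resolventGraph φ (singularSet φ α ∩ closedBall 0 R) t
  have hT : Prod.fst '' T ⊆ closedBall 0 (2 * R) := by
    convert image_fst_resolventGraph_subset_closedBall hL ht.le inter_subset_right using 2
    rw [div_mul_cancel₀ R hL0.ne']; ring
  obtain ⟨u, hu, huT⟩ :=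
    exists_lipschitzOnWith_one_of_dist_le (dist_snd_le_dist_fst_of_mem_resolventGraph ht.le)
  refine (hausdorffMeasure_le_of_subset_biUnion_image _ Prod.fst _ hu (by positivity) hT
    (subset_biUnion_image_resolventGraph hα ht inter_subset_left hT huT)).trans
    (ENNReal.ofReal_le_ofReal ?_)
  set s := √((n : ℝ) + 1)
  set N := ⌊2 * R / (t * α / (2 * s))⌋₊
  have hN : (N : ℝ) ≤ 4 * s * L / α :=
    (show 2 * R / (t * α / (2 * s)) = 4 * s * L / α by simp only [t]; field_simp; ring) ▸
      Nat.floor_le (by positivity)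
  have hLα : 1 ≤ 2 * L / α := by rw [le_div_iff₀ hα]; linarith
  rw [Finset.card_product, Finset.card_univ, Fintype.card_fin, Int.card_Icc_neg_natCast]
  calc ((n + 1) * (2 * N + 1) : ℕ) * (s * (2 * (2 * R))) ^ n
      ≤ (n + 1) * (2 * (4 * s * L / α) + 2 * L / α) * (s * (2 * (2 * R))) ^ n := by
        push_cast; gcongr
    _ = (n + 1) * (8 * s + 2) * (4 * s) ^ n * L * R ^ n / α := by ring

/-- Hausdorff measure bound on the singular set
`Σ_α = {x : diam(∂φ(x)) ≥ α}` of a convex Lipschitz function: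
`H^(d-1)(Σ_α ∩ B(0,R)) ≤ c_d Lip(φ) R^(d-1)/α` for a dimensional constant `c_d`. -/
theorem hausdorff_measure_singular_set (d : ℕ) :
    ∃ c : ℝ, 0 < c ∧
      ∀ (L : NNReal) (φ : EuclideanSpace ℝ (Fin d) → ℝ),
        ConvexOn ℝ Set.univ φ → LipschitzWith L φ →
        ∀ R α : ℝ, 0 < R → 0 < α →
          μH[(d : ℝ) - 1]
              ({x : EuclideanSpace ℝ (Fin d) | α ≤ Metric.diam (subdiff φ x)} ∩
                closedBall 0 R) ≤
            ENNReal.ofReal (c * (L : ℝ) * R ^ (d - 1) / α) := by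
  rcases d with _ | n
  · refine ⟨1, one_pos, fun L φ _ _ R α _ hα ↦ ?_⟩
    have hempty : {x : EuclideanSpace ℝ (Fin 0) | α ≤ diam (subdiff φ x)} = ∅ :=
      eq_empty_of_forall_notMem fun x hx ↦
        hα.not_ge (hx.trans (diam_subsingleton subsingleton_of_subsingleton).le)
    simp [hempty]
  · refine ⟨(n + 1) * (8 * √(n + 1) + 2) * (4 * √(n + 1)) ^ n, by positivity,
      fun L φ _ hL R α hR hα ↦ ?_⟩
    rw [show ((n + 1 : ℕ) : ℝ) - 1 = n by push_cast; ring, Nat.add_sub_cancel]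
    exact hausdorffMeasure_singularSet_inter_closedBall_le hL hR hα
end

section
/- Let φ : ℝ^d → ℝ be a convex function (hence locally Lipschitz and differentiable Lebesgue-almost everywhere). Then for every x ∈ ℝ^d and η > 0, ∫_{B(x,4η)} ‖∇φ(u)‖ du ≥ (β_d η^{d−1}/6) · osc_{B(x,2η)}(φ), where β_d is the Lebesgue volume of the unit ball of ℝ^d, osc_K(f) = sup_{u,v ∈ K} |f(u) − f(v)|, and the integral of the a.e.-defined gradient is with respect to Lebesgue measure. -/
open Metric Set MeasureTheory

/-- The oscillation `osc_K(f) = sup_{u,v ∈ K} |f(u) - f(v)|`. -/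
noncomputable def osc {d : ℕ} (f : EuclideanSpace ℝ (Fin d) → ℝ)
    (K : Set (EuclideanSpace ℝ (Fin d))) : ℝ :=
  sSup ((fun q : EuclideanSpace ℝ (Fin d) × EuclideanSpace ℝ (Fin d) => |f q.1 - f q.2|) ''
    (K ×ˢ K))

/-!
Let `v` and `u` be a maximum and a minimum point of `φ` on `B(x, 2η)`. Every `w` in the ball
`B(c, η)`, `c = v + (v - x) / 2`, satisfies `v = (2/3) w + (1/3) x'` for some `x' ∈ B(x, 2η)`,
so convexity forces `φ v ≤ φ w`: `v` is a minimum of `φ` on `B(c, η) ⊆ B(x, 4η)`. At every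
point `w` of `B(c, η)` where `φ` is differentiable (almost all of them, by Rademacher's theorem),
the subgradient inequality then gives
`osc = φ v - φ u ≤ φ w - φ u ≤ ‖∇φ w‖ ‖w - u‖ ≤ 6η ‖∇φ w‖`,
and integrating over `B(c, η)`, of volume `β_d η^d`, gives the bound.
-/

open Filter Topology

section LocallyLipschitz

variable {E F : Type*} [NormedAddCommGroup E] [NormedSpace ℝ E] [NormedAddCommGroup F]
  [NormedSpace ℝ F] {f : E → F}

theorem LocallyLipschitz.isBoundedUnder_norm_fderiv (hf : LocallyLipschitz f) (x : E) :
    IsBoundedUnder (· ≤ ·) (𝓝 x) fun y => ‖fderiv ℝ f y‖ := by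
  obtain ⟨K, t, ht, hK⟩ := hf x
  refine ⟨K, eventually_map.2 ?_⟩
  filter_upwards [interior_mem_nhds.2 ht] with y hy
  exact norm_fderiv_le_of_lipschitzOn ℝ (mem_interior_iff_mem_nhds.1 hy) hK

theorem LocallyLipschitz.locallyIntegrable_norm_fderiv [MeasurableSpace E]
    [OpensMeasurableSpace E] [CompleteSpace F] (μ : Measure E) [IsLocallyFiniteMeasure μ]
    (hf : LocallyLipschitz f) :
    LocallyIntegrable (fun y => ‖fderiv ℝ f y‖) μ := fun x =>
  (μ.finiteAt_nhds x).integrableAtFilter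
    (measurable_fderiv ℝ f).norm.stronglyMeasurable.stronglyMeasurableAtFilter
    (by simpa only [Function.comp_def, norm_norm] using hf.isBoundedUnder_norm_fderiv x)

theorem LocallyLipschitz.ae_differentiableAt [FiniteDimensional ℝ E] [FiniteDimensional ℝ F]
    [MeasurableSpace E] [BorelSpace E] (μ : Measure E) [μ.IsAddHaarMeasure]
    (hf : LocallyLipschitz f) : ∀ᵐ x ∂μ, DifferentiableAt ℝ f x := by
  have hball (n : ℕ) : ∀ᵐ x ∂μ, x ∈ ball (0 : E) n → DifferentiableAt ℝ f x := by
    obtain ⟨K, hK⟩ := LocallyLipschitzOn.exists_lipschitzOnWith_of_compact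
      (isCompact_closedBall (0 : E) n) hf.locallyLipschitzOn
    filter_upwards [(hK.mono ball_subset_closedBall).ae_differentiableWithinAt_of_mem (μ := μ)]
      with x hx hxn
    exact (hx hxn).differentiableAt (isOpen_ball.mem_nhds hxn)
  filter_upwards [ae_all_iff.2 hball] with x hx
  obtain ⟨n, hn⟩ := exists_nat_gt ‖x‖
  exact hx n (mem_ball_zero_iff.2 hn)

end LocallyLipschitz

section Convex

variable {E : Type*} [NormedAddCommGroup E] [NormedSpace ℝ E] {φ : E → ℝ}

theorem ConvexOn.sub_le_fderiv_apply_sub (hφ : ConvexOn ℝ univ φ) {w : E}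
    (hw : DifferentiableAt ℝ φ w) (u : E) : φ w - φ u ≤ fderiv ℝ φ w (w - u) := by
  set ℓ : ℝ →ᵃ[ℝ] E := AffineMap.lineMap u w with hℓ
  have hline : ConvexOn ℝ univ (φ ∘ ℓ) := by simpa using hφ.comp_affineMap ℓ
  have hderiv : HasDerivAt (φ ∘ ℓ) (fderiv ℝ φ w (w - u)) 1 :=
    hw.hasFDerivAt.comp_hasDerivAt_of_eq 1 AffineMap.hasDerivAt_lineMap (by simp [hℓ])
  simpa [hℓ, slope_def_field] using
    hline.slope_le_of_hasDerivAt (mem_univ 0) (mem_univ 1) one_pos hderiv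

theorem ConvexOn.isMinOn_closedBall_of_isMaxOn (hφ : ConvexOn ℝ univ φ) {x v : E} {r : ℝ}
    (hmax : IsMaxOn φ (closedBall x (2 * r)) v) :
    IsMinOn φ (closedBall (v + (2⁻¹ : ℝ) • (v - x)) r) v := by
  intro w hw
  set x' := x - (2 : ℝ) • (w - (v + (2⁻¹ : ℝ) • (v - x)))
  have hx' : x' ∈ closedBall x (2 * r) := by
    rw [mem_closedBall_iff_norm] at hw ⊢
    rw [show x' - x = -((2 : ℝ) • (w - (v + (2⁻¹ : ℝ) • (v - x)))) by module, norm_neg,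
      norm_smul, Real.norm_two]
    linarith
  have hconv := hφ.2 (mem_univ w) (mem_univ x') (by norm_num : (0 : ℝ) ≤ 2 / 3)
    (by norm_num : (0 : ℝ) ≤ 1 / 3) (by norm_num)
  rw [show (2 / 3 : ℝ) • w + (1 / 3 : ℝ) • x' = v by module, smul_eq_mul, smul_eq_mul] at hconv
  have hx'v : φ x' ≤ φ v := hmax hx'
  show φ v ≤ φ w
  linarith

end Convex

section InnerProductSpace

variable {E : Type*} [NormedAddCommGroup E] [InnerProductSpace ℝ E] [CompleteSpace E] {φ : E → ℝ}

theorem norm_gradient_eq_norm_fderiv (f : E → ℝ) (x : E) : ‖gradient f x‖ = ‖fderiv ℝ f x‖ :=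
  (InnerProductSpace.toDual ℝ E).symm.norm_map _

theorem ConvexOn.sub_le_norm_gradient_mul_norm_sub (hφ : ConvexOn ℝ univ φ) {w : E}
    (hw : DifferentiableAt ℝ φ w) (u : E) : φ w - φ u ≤ ‖gradient φ w‖ * ‖w - u‖ :=
  calc φ w - φ u ≤ fderiv ℝ φ w (w - u) := hφ.sub_le_fderiv_apply_sub hw u
    _ ≤ ‖fderiv ℝ φ w‖ * ‖w - u‖ := (Real.le_norm_self _).trans (ContinuousLinearMap.le_opNorm _ _)
    _ = ‖gradient φ w‖ * ‖w - u‖ := by rw [norm_gradient_eq_norm_fderiv]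

theorem ConvexOn.sub_le_mul_norm_gradient_of_isMaxOn (hφ : ConvexOn ℝ univ φ) {x u v w : E}
    {r : ℝ} (hu : u ∈ closedBall x (2 * r)) (hv : v ∈ closedBall x (2 * r))
    (hmax : IsMaxOn φ (closedBall x (2 * r)) v) (hw : w ∈ closedBall (v + (2⁻¹ : ℝ) • (v - x)) r)
    (hdiff : DifferentiableAt ℝ φ w) :
    φ v - φ u ≤ 6 * r * ‖gradient φ w‖ := by
  have hvw : φ v ≤ φ w := hφ.isMinOn_closedBall_of_isMaxOn hmax hw
  rw [mem_closedBall_iff_norm] at hu hv hw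
  have hwu : ‖w - u‖ ≤ 6 * r :=
    calc ‖w - u‖ = ‖(w - (v + (2⁻¹ : ℝ) • (v - x)) + (3 / 2 : ℝ) • (v - x)) - (u - x)‖ := by
          congr 1; module
      _ ≤ r + 3 / 2 * (2 * r) + 2 * r := by
          refine (norm_sub_le _ _).trans (add_le_add ((norm_add_le _ _).trans ?_) hu)
          rw [norm_smul, Real.norm_of_nonneg (by norm_num)]
          gcongr
      _ = 6 * r := by ring
  calc φ v - φ u ≤ φ w - φ u := by linarith
    _ ≤ ‖gradient φ w‖ * ‖w - u‖ := hφ.sub_le_norm_gradient_mul_norm_sub hdiff u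
    _ ≤ 6 * r * ‖gradient φ w‖ := by rw [mul_comm]; gcongr

variable [FiniteDimensional ℝ E] [MeasurableSpace E] [BorelSpace E] (μ : Measure E)

theorem ConvexOn.integrableOn_norm_gradient [IsLocallyFiniteMeasure μ] (hφ : ConvexOn ℝ univ φ)
    {K : Set E} (hK : IsCompact K) : IntegrableOn (fun w => ‖gradient φ w‖) K μ := by
  simp only [norm_gradient_eq_norm_fderiv]
  exact (hφ.locallyLipschitz.locallyIntegrable_norm_fderiv μ).integrableOn_isCompact hK

theorem ConvexOn.sub_div_mul_measureReal_le_setIntegral_norm_gradient [μ.IsAddHaarMeasure]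
    (hφ : ConvexOn ℝ univ φ) {x u v : E} {r : ℝ} (hr : 0 < r) (hu : u ∈ closedBall x (2 * r))
    (hv : v ∈ closedBall x (2 * r)) (hmax : IsMaxOn φ (closedBall x (2 * r)) v) :
    (φ v - φ u) / (6 * r) * μ.real (closedBall (v + (2⁻¹ : ℝ) • (v - x)) r) ≤
      ∫ w in closedBall (v + (2⁻¹ : ℝ) • (v - x)) r, ‖gradient φ w‖ ∂μ := by
  rw [mul_comm, ← smul_eq_mul, ← setIntegral_const]
  refine setIntegral_mono_ae_restrict (integrableOn_const measure_closedBall_lt_top.ne)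
    (hφ.integrableOn_norm_gradient μ (isCompact_closedBall _ _)) ?_
  rw [EventuallyLE, ae_restrict_iff' measurableSet_closedBall]
  filter_upwards [hφ.locallyLipschitz.ae_differentiableAt μ] with w hdiff hw
  rw [div_le_iff₀ (by positivity), mul_comm]
  exact hφ.sub_le_mul_norm_gradient_of_isMaxOn hu hv hmax hw hdiff

end InnerProductSpace

theorem osc_eq_sub_of_isMaxOn_of_isMinOn {d : ℕ} {f : EuclideanSpace ℝ (Fin d) → ℝ}
    {K : Set (EuclideanSpace ℝ (Fin d))} {u v : EuclideanSpace ℝ (Fin d)} (hu : u ∈ K)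
    (hv : v ∈ K) (hmax : IsMaxOn f K v) (hmin : IsMinOn f K u) : osc f K = f v - f u := by
  refine IsGreatest.csSup_eq
    ⟨⟨(v, u), mk_mem_prod hv hu, abs_of_nonneg (sub_nonneg.2 (hmin hv))⟩, ?_⟩
  rintro _ ⟨⟨a, b⟩, ⟨ha, hb⟩, rfl⟩
  rw [isMaxOn_iff] at hmax
  rw [isMinOn_iff] at hmin
  exact abs_sub_le_iff.2 ⟨by linarith [hmax a ha, hmin b hb], by linarith [hmax b hb, hmin a ha]⟩

/-- for a convex `φ : ℝ^d → ℝ`, every `x` and `η > 0`,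
`∫_{B(x,4η)} ‖∇φ(u)‖ du ≥ (β_d η^(d-1)/6) osc_{B(x,2η)}(φ)`, where `β_d` is the volume
of the unit ball. -/
theorem integral_gradient_ge_osc (d : ℕ) (φ : EuclideanSpace ℝ (Fin d) → ℝ)
    (hφ : ConvexOn ℝ Set.univ φ) (x : EuclideanSpace ℝ (Fin d)) (η : ℝ) (hη : 0 < η) :
    (volume (ball (0 : EuclideanSpace ℝ (Fin d)) 1)).toReal * η ^ (d - 1) / 6 *
        osc φ (closedBall x (2 * η)) ≤
      ∫ u in closedBall x (4 * η), ‖gradient φ u‖ := by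
  have hcont : Continuous φ := hφ.locallyLipschitz.continuous
  have hne : (closedBall x (2 * η)).Nonempty := nonempty_closedBall.2 (by positivity)
  obtain ⟨v, hv, hmax⟩ := (isCompact_closedBall x (2 * η)).exists_isMaxOn hne hcont.continuousOn
  obtain ⟨u, hu, hmin⟩ := (isCompact_closedBall x (2 * η)).exists_isMinOn hne hcont.continuousOn
  rw [osc_eq_sub_of_isMaxOn_of_isMinOn hu hv hmax hmin]
  -- `d - 1` truncates at `d = 0`, where the space is a point and the oscillation vanishes.
  rcases Nat.eq_zero_or_pos d with rfl | hd
  · rw [Subsingleton.elim v u, sub_self, mul_zero]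
    exact setIntegral_nonneg measurableSet_closedBall fun _ _ => norm_nonneg _
  set c := v + (2⁻¹ : ℝ) • (v - x)
  have hsub : closedBall c η ⊆ closedBall x (4 * η) := by
    refine closedBall_subset_closedBall' ?_
    rw [dist_eq_norm, show c - x = (3 / 2 : ℝ) • (v - x) by module, norm_smul,
      Real.norm_of_nonneg (by norm_num)]
    linarith [mem_closedBall_iff_norm.1 hv]
  calc _ = (φ v - φ u) / (6 * η) * volume.real (closedBall c η) := by
        rw [Measure.addHaar_real_closedBall _ _ hη.le, finrank_euclideanSpace_fin, measureReal_def,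
          ← Nat.sub_add_cancel hd, pow_succ, Nat.add_sub_cancel]
        field_simp
    _ ≤ ∫ w in closedBall c η, ‖gradient φ w‖ :=
        hφ.sub_div_mul_measureReal_le_setIntegral_norm_gradient volume hη hu hv hmax
    _ ≤ ∫ w in closedBall x (4 * η), ‖gradient φ w‖ :=
        setIntegral_mono_set (hφ.integrableOn_norm_gradient volume (isCompact_closedBall _ _))
          (Eventually.of_forall fun _ => norm_nonneg _) hsub.eventuallyLE
end
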